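/- Let Ω be the probability space of random Cantor sets E^ω ⊆ [0,1]² obtained by iteratively subdividing each surviving square into 4 congruent subsquares and uniformly at random deleting one, with natural limit measure μ^ω giving each of the 3^n squares of generation n mass 3^{−n}. If F ⊆ [0,1]² has Lebesgue measure zero, then almost surely μ^ω(F) = 0. -/

import Mathlib

open MeasureTheory Filter
open scoped ENNReal BoundedContinuousFunction

noncomputable section

/-- The offset of quadrant `a` of the unit square. -/
def quadOffset : Fin 4 → ℝ × ℝ
  | 0 => (0, 0)
  | 1 => (1 / 2, 0)
  | 2 => (0, 1 / 2)
  | 3 => (1 / 2, 1 / 2)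

/-- The lower-left corner of the dyadic square addressed by the word `w`
(the head of `w` is the coarsest subdivision step). -/
def sqCorner : List (Fin 4) → ℝ × ℝ
  | [] => (0, 0)
  | a :: w => ((quadOffset a).1 + (sqCorner w).1 / 2, (quadOffset a).2 + (sqCorner w).2 / 2)

/-- The closed dyadic square of side `2^{-|w|}` addressed by the word `w`. -/
def dyadicSquare (w : List (Fin 4)) : Set (ℝ × ℝ) :=
  Set.Icc (sqCorner w).1 ((sqCorner w).1 + (1 / 2) ^ w.length) ×ˢ
    Set.Icc (sqCorner w).2 ((sqCorner w).2 + (1 / 2) ^ w.length)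

/-- Given the random deletion data `ω` (assigning to each square the index of its deleted
child), the square addressed by `w` survives iff at every subdivision step the chosen
quadrant differs from the deleted one. -/
def survives (ω : List (Fin 4) → Fin 4) (w : List (Fin 4)) : Prop :=
  ∀ u : List (Fin 4), ∀ a : Fin 4, (u ++ [a]) <+: w → a ≠ ω u

/-- The union `E_n^ω` of the `3^n` surviving squares of generation `n`. -/
def genSet (ω : List (Fin 4) → Fin 4) (n : ℕ) : Set (ℝ × ℝ) :=
  ⋃ w ∈ {w : List (Fin 4) | w.length = n ∧ survives ω w}, dyadicSquare w

/-- The approximating measure `μ_n^ω = (4/3)^n · Leb|_{E_n^ω}`. -/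
def approxMeasure (ω : List (Fin 4) → Fin 4) (n : ℕ) : Measure (ℝ × ℝ) :=
  ((4 / 3 : ℝ≥0∞)) ^ n • volume.restrict (genSet ω n)

/-!
For an open set `U`, each generation-`n` square survives with probability `(3/4)^n`, so
`E[μ_n^ω(U)] = (4/3)^n · Σ_w P(Q_w survives) · |U ∩ Q_w| ≤ |U|`. The portmanteau theorem gives
`μ^ω(U) ≤ liminf_n μ_n^ω(U)`, and Fatou's lemma bounds the expectation of the right side by `|U|`.
Choosing open `U ⊇ F` of arbitrarily small measure, `μ^ω(F)` is dominated by measurable functions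
of arbitrarily small expectation, hence vanishes almost surely.
-/

open Topology

lemma le_liminf_measure_open_of_forall_integral_tendsto {X ι : Type*} {L : Filter ι} [L.NeBot]
    [MeasurableSpace X] [TopologicalSpace X] [OpensMeasurableSpace X] [HasOuterApproxClosed X]
    {μs : ι → Measure X} [∀ i, IsProbabilityMeasure (μs i)] {μ : Measure X}
    (h : ∀ g : X →ᵇ ℝ, Tendsto (fun i => ∫ x, g x ∂μs i) L (𝓝 (∫ x, g x ∂μ)))
    {U : Set X} (hU : IsOpen U) : μ U ≤ L.liminf fun i => μs i U := by
  have : IsProbabilityMeasure μ := by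
    have h1 := h 1
    simp only [BoundedContinuousFunction.coe_one, Pi.one_apply, integral_const, probReal_univ,
      smul_eq_mul, mul_one] at h1
    have h2 : μ.real Set.univ = 1 := (tendsto_nhds_unique tendsto_const_nhds h1).symm
    exact ⟨(ENNReal.toReal_eq_one_iff _).1 h2⟩
  exact ProbabilityMeasure.le_liminf_measure_open_of_tendsto (μs := fun i => ⟨μs i, inferInstance⟩)
    (μ := ⟨μ, this⟩) (ProbabilityMeasure.tendsto_iff_forall_integral_tendsto.2 h) hU

/-- `f` need not be measurable: here `f = fun ω => μ ω F`, whose measurability is unknown. -/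
lemma ae_eq_zero_of_forall_exists_le_lintegral_le {α : Type*} [MeasurableSpace α]
    {μ : Measure α} {f : α → ℝ≥0∞}
    (h : ∀ ε > 0, ∃ g, Measurable g ∧ f ≤ g ∧ ∫⁻ x, g x ∂μ ≤ ε) : f =ᵐ[μ] 0 := by
  choose g hg hfg hgε using fun k : ℕ =>
    h (k : ℝ≥0∞)⁻¹ (ENNReal.inv_pos.2 (ENNReal.natCast_ne_top k))
  have hint : ∫⁻ x, ⨅ k, g k x ∂μ = 0 := nonpos_iff_eq_zero.1 <|
    ge_of_tendsto' ENNReal.tendsto_inv_nat_nhds_zero fun k =>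
      (lintegral_mono fun x => iInf_le _ k).trans (hgε k)
  filter_upwards [(lintegral_eq_zero_iff (Measurable.iInf hg)).1 hint] with x hx
  exact le_antisymm ((le_iInf fun k => hfg k x).trans hx.le) zero_le

namespace RandomCantor

open Finset Function ProbabilityTheory

/-- Unlike the closed squares, the half-open ones of a fixed generation are pairwise disjoint. -/
def dyadicSquareIco (w : List (Fin 4)) : Set (ℝ × ℝ) :=
  Set.Ico (sqCorner w).1 ((sqCorner w).1 + (1 / 2) ^ w.length) ×ˢ
    Set.Ico (sqCorner w).2 ((sqCorner w).2 + (1 / 2) ^ w.length)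

lemma mem_dyadicSquareIco_cons {a : Fin 4} {w : List (Fin 4)} {x : ℝ × ℝ} :
    x ∈ dyadicSquareIco (a :: w) ↔
      (2 * (x.1 - (quadOffset a).1), 2 * (x.2 - (quadOffset a).2)) ∈ dyadicSquareIco w := by
  simp only [dyadicSquareIco, sqCorner, List.length_cons, pow_succ, Set.mem_prod, Set.mem_Ico]
  constructor <;> rintro ⟨⟨_, _⟩, _, _⟩ <;> refine ⟨⟨?_, ?_⟩, ?_, ?_⟩ <;> linarith

lemma dyadicSquareIco_subset_unit (w : List (Fin 4)) :
    dyadicSquareIco w ⊆ Set.Ico 0 1 ×ˢ Set.Ico 0 1 := by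
  induction w with
  | nil => simp [dyadicSquareIco, sqCorner]
  | cons a w ih =>
    intro x hx
    obtain ⟨⟨h1, h2⟩, h3, h4⟩ := ih (mem_dyadicSquareIco_cons.1 hx)
    refine ⟨⟨?_, ?_⟩, ?_, ?_⟩ <;> fin_cases a <;> simp_all [quadOffset] <;> linarith

lemma disjoint_dyadicSquareIco {w w' : List (Fin 4)} (hlen : w.length = w'.length)
    (hne : w ≠ w') : Disjoint (dyadicSquareIco w) (dyadicSquareIco w') := by
  induction w generalizing w' with
  | nil => cases w' <;> simp_all
  | cons a u ih =>
    cases w' with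
    | nil => simp at hlen
    | cons b v =>
      rw [Set.disjoint_left]
      intro x hx hx'
      rw [mem_dyadicSquareIco_cons] at hx hx'
      by_cases hab : a = b
      · subst hab
        exact Set.disjoint_left.1 (ih (by simpa using hlen) (by simpa using hne)) hx hx'
      · obtain ⟨⟨h1, h2⟩, h3, h4⟩ := dyadicSquareIco_subset_unit u hx
        obtain ⟨⟨h1', h2'⟩, h3', h4'⟩ := dyadicSquareIco_subset_unit v hx'
        fin_cases a <;> fin_cases b <;> simp_all [quadOffset] <;> linarith

lemma dyadicSquare_ae_eq_Ico (w : List (Fin 4)) :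
    dyadicSquare w =ᵐ[volume] dyadicSquareIco w := by
  rw [dyadicSquare, dyadicSquareIco, Measure.volume_eq_prod]
  exact Measure.set_prod_ae_eq Ico_ae_eq_Icc.symm Ico_ae_eq_Icc.symm

lemma aedisjoint_dyadicSquare {w w' : List (Fin 4)} (hlen : w.length = w'.length)
    (hne : w ≠ w') : AEDisjoint volume (dyadicSquare w) (dyadicSquare w') :=
  (disjoint_dyadicSquareIco hlen hne).aedisjoint.congr
    (dyadicSquare_ae_eq_Ico w) (dyadicSquare_ae_eq_Ico w')

lemma volume_dyadicSquare (w : List (Fin 4)) :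
    volume (dyadicSquare w) = 4⁻¹ ^ w.length := by
  rw [dyadicSquare, Measure.volume_eq_prod, Measure.prod_prod, Real.volume_Icc, Real.volume_Icc,
    add_sub_cancel_left, add_sub_cancel_left, ← ENNReal.ofReal_mul (by positivity), ← mul_pow,
    ENNReal.ofReal_pow (by norm_num), show (1 / 2 * (1 / 2) : ℝ) = 4⁻¹ by norm_num,
    ENNReal.ofReal_inv_of_pos (by norm_num)]
  simp

lemma survives_append_singleton {ω : List (Fin 4) → Fin 4} {w : List (Fin 4)} {a : Fin 4} :
    survives ω (w ++ [a]) ↔ survives ω w ∧ a ≠ ω w := by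
  refine ⟨fun h => ⟨fun u b hub => h u b (List.prefix_concat_iff.2 (.inr hub)),
    h w a (List.prefix_refl _)⟩, fun ⟨hw, ha⟩ u b hub => ?_⟩
  rcases List.prefix_concat_iff.1 hub with heq | hub
  · obtain ⟨rfl, hba⟩ := List.append_inj' heq rfl
    simpa [List.singleton_inj.1 hba] using ha
  · exact hw u b hub

lemma survives_iff_forall_getElem {ω : List (Fin 4) → Fin 4} {w : List (Fin 4)} :
    survives ω w ↔ ∀ k : Fin w.length, w[k] ≠ ω (w.take k) := by
  refine ⟨fun h k => h _ _ ?_, fun h u b hub => ?_⟩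
  · rw [Fin.getElem_fin, List.take_concat_get']
    exact List.take_prefix _ _
  · have hlt : u.length < w.length := by simpa using hub.length_le
    have hu : u = w.take u.length := List.prefix_iff_eq_take.1 ((List.prefix_append _ _).trans hub)
    have hb : b = w[u.length] := by simpa using hub.getElem (i := u.length) (by simp)
    have := h ⟨u.length, hlt⟩
    rw [← hu] at this
    rwa [hb]

open scoped Classical in
def survivors (ω : List (Fin 4) → Fin 4) (n : ℕ) : Finset (Fin n → Fin 4) :=
  {φ | survives ω (List.ofFn φ)}

lemma card_survivors (ω : List (Fin 4) → Fin 4) (n : ℕ) : #(survivors ω n) = 3 ^ n := by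
  classical
  induction n with
  | zero => simp [survivors, survives]
  | succ n ih =>
    have hsplit : #(survivors ω (n + 1)) =
        #{p ∈ survivors ω n ×ˢ univ | p.2 ≠ ω (List.ofFn p.1)} := by
      refine card_nbij' (fun φ => (fun i => φ i.castSucc, φ (Fin.last n)))
        (fun p => Fin.snoc p.1 p.2) ?_ ?_ (fun φ _ => Fin.snoc_init_self φ) (fun p _ => by simp)
      all_goals
        intro _
        simp only [survivors, coe_filter, mem_univ, true_and, Set.mem_ofPred_eq, mem_product,
          and_true, List.ofFn_succ', List.concat_eq_append, survives_append_singleton]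
        simp
    rw [hsplit, card_filter, sum_product]
    simp_rw [← card_filter, filter_ne', card_erase_of_mem (mem_univ _), card_univ,
      Fintype.card_fin, sum_const, ih, smul_eq_mul, pow_succ]

lemma genSet_eq_biUnion (ω : List (Fin 4) → Fin 4) (n : ℕ) :
    genSet ω n = ⋃ φ ∈ survivors ω n, dyadicSquare (List.ofFn φ) := by
  ext x
  simp only [genSet, survivors, Set.mem_iUnion, mem_filter, mem_univ, true_and, exists_prop,
    Set.mem_ofPred_eq]
  constructor
  · rintro ⟨w, ⟨rfl, hw⟩, hx⟩
    exact ⟨w.get, by rwa [List.ofFn_get], by rwa [List.ofFn_get]⟩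
  · rintro ⟨φ, hφ, hx⟩
    exact ⟨_, ⟨List.length_ofFn, hφ⟩, hx⟩

lemma pairwise_aedisjoint_dyadicSquare_ofFn {μ : Measure (ℝ × ℝ)} (hμ : μ ≪ volume) (n : ℕ) :
    Pairwise (AEDisjoint μ on (fun φ : Fin n → Fin 4 => dyadicSquare (List.ofFn φ))) :=
  fun _ _ hne => hμ <| aedisjoint_dyadicSquare (by simp) (List.ofFn_injective.ne hne)

lemma approxMeasure_apply (ω : List (Fin 4) → Fin 4) (n : ℕ) (U : Set (ℝ × ℝ)) :
    approxMeasure ω n U =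
      (4 / 3) ^ n * ∑ φ ∈ survivors ω n, volume.restrict U (dyadicSquare (List.ofFn φ)) := by
  have hmeas : MeasurableSet (genSet ω n) := by
    rw [genSet_eq_biUnion]
    exact measurableSet_biUnion _ fun _ _ => measurableSet_Icc.prod measurableSet_Icc
  rw [approxMeasure, Measure.smul_apply, smul_eq_mul, Measure.restrict_apply' hmeas,
    Set.inter_comm, ← Measure.restrict_apply hmeas, genSet_eq_biUnion, measure_biUnion_finset₀
      (fun _ _ _ _ hne => pairwise_aedisjoint_dyadicSquare_ofFn
        (Measure.absolutelyContinuous_of_le Measure.restrict_le_self) n hne)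
      fun _ _ => (measurableSet_Icc.prod measurableSet_Icc).nullMeasurableSet]

lemma sum_restrict_dyadicSquare_le (n : ℕ) (U : Set (ℝ × ℝ)) :
    ∑ φ : Fin n → Fin 4, volume.restrict U (dyadicSquare (List.ofFn φ)) ≤ volume U := by
  simpa only [Measure.restrict_apply_univ] using sum_measure_le_measure_univ (s := univ)
    (μ := volume.restrict U) (t := fun φ : Fin n → Fin 4 => dyadicSquare (List.ofFn φ))
    (fun _ _ => (measurableSet_Icc.prod measurableSet_Icc).nullMeasurableSet)
    fun _ _ _ _ hne => pairwise_aedisjoint_dyadicSquare_ofFn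
      (Measure.absolutelyContinuous_of_le Measure.restrict_le_self) n hne

lemma four_thirds_mul_three_quarters : (4 / 3 : ℝ≥0∞) * (3 / 4) = 1 := by
  rw [div_eq_mul_inv, div_eq_mul_inv,
    show (4 : ℝ≥0∞) * 3⁻¹ * (3 * 4⁻¹) = 4 * (3⁻¹ * 3) * 4⁻¹ by ring,
    ENNReal.inv_mul_cancel (by norm_num) (by norm_num), mul_one,
    ENNReal.mul_inv_cancel (by norm_num) (by norm_num)]

instance isProbabilityMeasure_approxMeasure (ω : List (Fin 4) → Fin 4) (n : ℕ) :
    IsProbabilityMeasure (approxMeasure ω n) where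
  measure_univ := by
    rw [approxMeasure_apply, Measure.restrict_univ]
    simp_rw [volume_dyadicSquare, List.length_ofFn, sum_const, card_survivors, nsmul_eq_mul,
      Nat.cast_pow, Nat.cast_ofNat, ← mul_pow, ← div_eq_mul_inv, four_thirds_mul_three_quarters,
      one_pow]

lemma setOf_survives_eq_iInter {Ω : Type*} (D : Ω → List (Fin 4) → Fin 4) (w : List (Fin 4)) :
    {ω | survives (D ω) w} = ⋂ k : Fin w.length, (fun ω => D ω (w.take k)) ⁻¹' {w[k]}ᶜ := by
  ext ω
  simp [survives_iff_forall_getElem, eq_comm]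

variable {Ω : Type*} [MeasurableSpace Ω] {P : Measure Ω} {D : Ω → List (Fin 4) → Fin 4}

lemma measurableSet_survives (hmeas : ∀ w, Measurable fun ω => D ω w) (w : List (Fin 4)) :
    MeasurableSet {ω | survives (D ω) w} := by
  rw [setOf_survives_eq_iInter]
  exact MeasurableSet.iInter fun k => hmeas _ (measurableSet_singleton _).compl

open scoped Classical in
lemma measurable_ite_survives (hmeas : ∀ w, Measurable fun ω => D ω w) (w : List (Fin 4))
    (c : ℝ≥0∞) : Measurable fun ω => if survives (D ω) w then c else 0 :=
  Measurable.ite (measurableSet_survives hmeas _) measurable_const measurable_const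

open scoped Classical in
lemma measurable_sum_ite_survives (hmeas : ∀ w, Measurable fun ω => D ω w) {n : ℕ}
    (c : (Fin n → Fin 4) → ℝ≥0∞) :
    Measurable fun ω => ∑ φ, if survives (D ω) (List.ofFn φ) then c φ else 0 :=
  measurable_sum _ fun φ _ => measurable_ite_survives hmeas _ (c φ)

lemma measure_survives [IsProbabilityMeasure P] (hmeas : ∀ w, Measurable fun ω => D ω w)
    (hunif : ∀ w a, P {ω | D ω w = a} = 1 / 4)
    (hindep : iIndepFun (m := fun _ => ⊤) (fun w ω => D ω w) P) (w : List (Fin 4)) :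
    P {ω | survives (D ω) w} = (3 / 4) ^ w.length := by
  have hinj : Injective fun k : Fin w.length => w.take k :=
    fun k l h => Fin.ext (by simpa using congrArg List.length h)
  have hne : ∀ u a, P ((fun ω => D ω u) ⁻¹' {a})ᶜ = 3 / 4 := by
    intro u a
    rw [prob_compl_eq_one_sub (hmeas u (measurableSet_singleton a))]
    refine ENNReal.sub_eq_of_eq_add (by norm_num) ?_
    rw [show (fun ω => D ω u) ⁻¹' {a} = {ω | D ω u = a} from rfl, hunif,
      ENNReal.div_add_div_same]
    norm_num
    exact (ENNReal.div_self (by norm_num) (by norm_num)).symm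
  rw [setOf_survives_eq_iInter, (hindep.precomp hinj).meas_iInter fun k => ⟨_, trivial, rfl⟩]
  simp [hne]

open scoped Classical in
lemma lintegral_approxMeasure_le [IsProbabilityMeasure P] (hmeas : ∀ w, Measurable fun ω => D ω w)
    (hunif : ∀ w a, P {ω | D ω w = a} = 1 / 4)
    (hindep : iIndepFun (m := fun _ => ⊤) (fun w ω => D ω w) P) (n : ℕ) (U : Set (ℝ × ℝ)) :
    ∫⁻ ω, approxMeasure (D ω) n U ∂P ≤ volume U := by
  set c : (Fin n → Fin 4) → ℝ≥0∞ := fun φ => volume.restrict U (dyadicSquare (List.ofFn φ))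
  have hc : ∀ φ, ∫⁻ ω, (if survives (D ω) (List.ofFn φ) then c φ else 0) ∂P = (3 / 4) ^ n * c φ :=
    fun φ => by
      have := lintegral_indicator_const (μ := P) (measurableSet_survives hmeas (List.ofFn φ)) (c φ)
      rwa [measure_survives hmeas hunif hindep, List.length_ofFn, mul_comm] at this
  calc ∫⁻ ω, approxMeasure (D ω) n U ∂P
      = (4 / 3) ^ n * ∑ φ, (3 / 4) ^ n * c φ := by
        simp_rw [approxMeasure_apply, survivors, sum_filter]
        rw [lintegral_const_mul _ (measurable_sum_ite_survives hmeas c),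
          lintegral_finsetSum _ fun φ _ => measurable_ite_survives hmeas _ (c φ)]
        simp_rw [hc]
    _ = ∑ φ, c φ := by
        rw [← mul_sum, ← mul_assoc, ← mul_pow, four_thirds_mul_three_quarters, one_pow, one_mul]
    _ ≤ volume U := sum_restrict_dyadicSquare_le n U

lemma measurable_approxMeasure_apply (hmeas : ∀ w, Measurable fun ω => D ω w) (n : ℕ)
    (U : Set (ℝ × ℝ)) : Measurable fun ω => approxMeasure (D ω) n U := by
  simp_rw [approxMeasure_apply, survivors, sum_filter]
  exact (measurable_sum_ite_survives hmeas _).const_mul _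

end RandomCantor

open RandomCantor in
theorem random_cantor_natural_measure_null_general
    {Ω : Type*} [MeasurableSpace Ω] (P : Measure Ω) [IsProbabilityMeasure P]
    (D : Ω → List (Fin 4) → Fin 4)
    (hmeas : ∀ w, Measurable fun ω => D ω w)
    (hunif : ∀ w a, P {ω | D ω w = a} = 1 / 4)
    (hindep : ProbabilityTheory.iIndepFun (m := fun _ => ⊤) (fun w ω => D ω w) P)
    (μ : Ω → Measure (ℝ × ℝ))
    (hweak : ∀ ω, ∀ g : (ℝ × ℝ) →ᵇ ℝ,
      Tendsto (fun n => ∫ x, g x ∂(approxMeasure (D ω) n)) atTop (nhds (∫ x, g x ∂(μ ω))))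
    (F : Set (ℝ × ℝ))
    (hFnull : volume F = 0) :
    ∀ᵐ ω ∂P, μ ω F = 0 := by
  refine ae_eq_zero_of_forall_exists_le_lintegral_le fun ε hε => ?_
  obtain ⟨U, hFU, hU, hUε⟩ := Set.exists_isOpen_lt_of_lt F ε (hFnull ▸ hε)
  have hmeasU n := measurable_approxMeasure_apply hmeas n U
  refine ⟨fun ω => liminf (fun n => approxMeasure (D ω) n U) atTop, .liminf hmeasU,
    fun ω => (measure_mono hFU).trans
      (le_liminf_measure_open_of_forall_integral_tendsto (hweak ω) hU), ?_⟩
  calc ∫⁻ ω, liminf (fun n => approxMeasure (D ω) n U) atTop ∂P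
      ≤ liminf (fun n => ∫⁻ ω, approxMeasure (D ω) n U ∂P) atTop := lintegral_liminf_le hmeasU
    _ ≤ volume U := liminf_le_of_frequently_le'
        (.of_forall fun n => lintegral_approxMeasure_le hmeas hunif hindep n U)
    _ ≤ ε := hUε.le

theorem random_cantor_natural_measure_null
    {Ω : Type*} [MeasurableSpace Ω] (P : Measure Ω) [IsProbabilityMeasure P]
    (D : Ω → List (Fin 4) → Fin 4)
    (hmeas : ∀ w, Measurable fun ω => D ω w)
    (hunif : ∀ w a, P {ω | D ω w = a} = 1 / 4)
    (hindep : ProbabilityTheory.iIndepFun (m := fun _ => ⊤) (fun w ω => D ω w) P)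
    (μ : Ω → Measure (ℝ × ℝ))
    (hweak : ∀ ω, ∀ g : (ℝ × ℝ) →ᵇ ℝ,
      Tendsto (fun n => ∫ x, g x ∂(approxMeasure (D ω) n)) atTop (nhds (∫ x, g x ∂(μ ω))))
    (F : Set (ℝ × ℝ)) (hF : F ⊆ Set.Icc (0 : ℝ) 1 ×ˢ Set.Icc (0 : ℝ) 1)
    (hFnull : volume F = 0) :
    ∀ᵐ ω ∂P, μ ω F = 0 :=
  random_cantor_natural_measure_null_general P D hmeas hunif hindep μ hweak F hFnull

end
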